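/- For every probability measure μ on I and every x ∈ I, Σ_{y ∈ I} p(x, y) = 1; that is, p is a stochastic Markov kernel on the countable set I. -/

import Mathlib

open Filter Topology MeasureTheory

/-- Words in the free monoid on two letters `α = true`, `β = false`. -/
abbrev Word := List Bool

/-- Conjugation: reverse the word and swap the two letters. -/
def wconj (x : Word) : Word := x.reverse.map (fun b => !b)

/-- Fusion multiplicity `m(z; x, y)`: the number of triples `(x₀, w, y₀)` with
`x = x₀w`, `y = w̄y₀` and `z = x₀y₀`. -/
def fm (x y z : Word) : ℕ :=
  ((Finset.range (x.length + 1)).filter (fun k =>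
    wconj (x.drop k) <+: y ∧ z = x.take k ++ y.drop (x.length - k))).card

/-- Maximal alternating blocks of a word. -/
def blocks : Word → List Word
  | [] => []
  | a :: rest =>
    match blocks rest with
    | [] => [[a]]
    | b :: bs => if b.head? = some a then [a] :: b :: bs else (a :: b) :: bs

/-- The quantum integer `[n]_q = (qⁿ - q⁻ⁿ)/(q - q⁻¹)`. -/
noncomputable def qnum (q : ℝ) (n : ℕ) : ℝ := (q ^ n - q⁻¹ ^ n) / (q - q⁻¹)

/-- Quantum dimension `dim_q(x) = ∏ᵢ [|xᵢ|+1]_q` over the maximal alternating blocks. -/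
noncomputable def dimq (q : ℝ) (x : Word) : ℝ :=
  ((blocks x).map (fun b => qnum q (b.length + 1))).prod

/-- Classical dimension `dim₁(x) = ∏ᵢ (|xᵢ|+1)` over the maximal alternating blocks. -/
def dim1 (x : Word) : ℕ := ((blocks x).map (fun b => b.length + 1)).prod
/-- The transition kernel of the random walk on `I` associated with a probability
measure `μ`: `p(x,y) = Σ_z μ(z)·m(z; x̄, y)·dim_q(y)/(dim_q(x)·dim_q(z))`. -/
noncomputable def pker (q : ℝ) (μ : Word → ℝ) (x y : Word) : ℝ :=
  ∑ᶠ z : Word, μ z * (fm (wconj x) y z : ℝ) * dimq q y / (dimq q x * dimq q z)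

/-- The `n`-step transition probabilities: `p₁ = p` and
`p_{n+1}(x,y) = Σ_u p_n(x,u)·p(u,y)`.  (The value at `n = 0` is irrelevant.) -/
noncomputable def pn (q : ℝ) (μ : Word → ℝ) : ℕ → Word → Word → ℝ
  | 0, _, _ => 0
  | 1, x, y => pker q μ x y
  | n + 2, x, y => ∑' u : Word, pn q μ (n + 1) x u * pker q μ u y

/-!
By Frobenius reciprocity `m(z; x̄, y) = m(y; x, z)`, the row sum `Σ_y p(x, y)` is
`Σ_z μ(z) · Σ_y m(y; x, z) dim_q(y) / (dim_q(x) dim_q(z))` once the two sums are interchanged, which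
is legitimate since all terms are nonnegative. The inner sum is `1` because `dim_q` is a dimension
function for the fusion rules, `Σ_y m(y; x, z) dim_q(y) = dim_q(x) dim_q(z)`. This follows by
induction from `xa ⊗ bz = xabz ⊕ δ_{b,ā} (x ⊗ z)` and the matching identity
`dim_q(xa) dim_q(bz) = dim_q(xabz) + δ_{b,ā} dim_q(x) dim_q(z)`: for `b = ā` the two blocks meeting at
the junction merge into one, and the identity becomes `[m+1][n+1] = [m+n+1] + [m][n]`.
-/

@[simp] lemma wconj_nil : wconj [] = [] := rfl

@[simp] lemma length_wconj (x : Word) : (wconj x).length = x.length := by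
  simp [wconj]

@[simp] lemma wconj_append (x y : Word) : wconj (x ++ y) = wconj y ++ wconj x := by
  simp [wconj]

@[simp] lemma wconj_singleton (a : Bool) : wconj [a] = [!a] := rfl

@[simp] lemma wconj_wconj (x : Word) : wconj (wconj x) = x := by
  simp [wconj, List.map_reverse, Function.comp_def]

@[simp] lemma wconj_eq_nil_iff {x : Word} : wconj x = [] ↔ x = [] := by
  simp [wconj]

lemma drop_wconj (x : Word) {k : ℕ} (hk : k ≤ x.length) :
    (wconj x).drop k = wconj (x.take (x.length - k)) := by
  simp only [wconj, ← List.map_drop, List.reverse_take]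
  congr 2
  omega

lemma take_wconj (x : Word) {k : ℕ} (hk : k ≤ x.length) :
    (wconj x).take k = wconj (x.drop (x.length - k)) := by
  simp only [wconj, ← List.map_take, List.reverse_drop]
  congr 2
  omega

lemma List.prefix_and_eq_append_drop_iff {α : Type*} (p s l m : List α) :
    (p <+: l ∧ m = s ++ l.drop p.length) ↔ ∃ t, l = p ++ t ∧ m = s ++ t := by
  constructor
  · rintro ⟨hp, rfl⟩
    exact ⟨_, (List.prefix_iff_eq_append.mp hp).symm, rfl⟩
  · rintro ⟨t, rfl, rfl⟩
    simp

open Finset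

open scoped Classical in
lemma fm_eq_sum (x y z : Word) :
    fm x y z = ∑ k ∈ range (x.length + 1),
      if ∃ t, y = wconj (x.drop k) ++ t ∧ z = x.take k ++ t then 1 else 0 := by
  rw [fm, card_filter]
  refine sum_congr rfl fun k _ => if_congr ?_ rfl rfl
  rw [← List.prefix_and_eq_append_drop_iff, length_wconj, List.length_drop]

lemma fm_nil_left (y z : Word) : fm [] y z = if z = y then 1 else 0 := by
  simp [fm_eq_sum, eq_comm]

lemma fm_nil_right (x z : Word) : fm x [] z = if z = x then 1 else 0 := by
  rw [fm_eq_sum, sum_range_succ, sum_eq_zero]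
  · simp
  · intro k hk
    simp [List.drop_eq_nil_iff, not_le.mpr (mem_range.mp hk)]

lemma fm_snoc_cons (x y z : Word) (a b : Bool) :
    fm (x ++ [a]) (b :: y) z =
      (if z = x ++ a :: b :: y then 1 else 0) + if b = !a then fm x y z else 0 := by
  classical
  rw [fm_eq_sum, List.length_append, List.length_singleton, sum_range_succ, add_comm, fm_eq_sum]
  congr 1
  · rw [List.take_of_length_le (by simp)]
    simp
  · split_ifs with hba
    · refine sum_congr rfl fun k hk => if_congr ?_ rfl rfl
      simp only [mem_range] at hk
      rw [List.drop_append_of_le_length (by omega), List.take_append_of_le_length (by omega)]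
      simp [hba]
    · refine sum_eq_zero fun k hk => if_neg ?_
      simp only [mem_range] at hk
      rw [List.drop_append_of_le_length (by omega)]
      simp [hba]

lemma fm_wconj_left (x y z : Word) : fm (wconj x) y z = fm x z y := by
  classical
  rw [fm_eq_sum, fm_eq_sum, length_wconj, ← sum_range_reflect]
  refine sum_congr rfl fun k hk => if_congr ?_ rfl rfl
  simp only [mem_range] at hk
  rw [drop_wconj _ (by omega), take_wconj _ (by omega), wconj_wconj,
    show x.length - (x.length + 1 - 1 - k) = k by omega]
  exact exists_congr fun t => and_comm

def consBlocks (a : Bool) : List Word → List Word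
  | [] => [[a]]
  | b :: bs => if b.head? = some a then [a] :: b :: bs else (a :: b) :: bs

lemma blocks_cons (a : Bool) (w : Word) : blocks (a :: w) = consBlocks a (blocks w) := by
  rw [blocks]; rfl

@[simp] lemma blocks_nil : blocks [] = [] := rfl

lemma blocks_singleton (a : Bool) : blocks [a] = [[a]] := rfl

lemma consBlocks_append {a : Bool} {L : List Word} (hL : L ≠ []) (M : List Word) :
    consBlocks a (L ++ M) = consBlocks a L ++ M := by
  obtain ⟨b, bs, rfl⟩ := List.exists_cons_of_ne_nil hL
  simp only [List.cons_append, consBlocks]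
  split_ifs <;> rfl

lemma head?_headD_blocks (w : Word) : ((blocks w).headD []).head? = w.head? := by
  cases w with
  | nil => rfl
  | cons a w =>
    rw [blocks_cons]
    cases blocks w with
    | nil => rfl
    | cons b bs => simp only [consBlocks]; split_ifs <;> rfl

lemma blocks_eq_nil_iff {w : Word} : blocks w = [] ↔ w = [] := by
  refine ⟨fun h => ?_, fun h => h ▸ rfl⟩
  simpa [h] using (head?_headD_blocks w).symm

lemma blocks_append_of_getLast?_eq_head? {u v : Word} (h : u.getLast? = v.head?) :
    blocks (u ++ v) = blocks u ++ blocks v := by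
  induction u with
  | nil => rfl
  | cons c u ih =>
    rcases eq_or_ne u [] with rfl | hu
    · obtain ⟨C, J, hv⟩ : ∃ C J, blocks v = C :: J :=
        List.exists_cons_of_ne_nil (blocks_eq_nil_iff.not.mpr (by rintro rfl; simp at h))
      have hC : C.head? = some c := by simpa [hv] using (head?_headD_blocks v).trans h.symm
      simp [blocks_cons, hv, consBlocks, hC]
    · rw [List.cons_append, blocks_cons, blocks_cons, ih (List.getLast?_cons_of_ne_nil hu ▸ h),
        consBlocks_append (blocks_eq_nil_iff.not.mpr hu)]

lemma ne_nil_of_mem_blocks {w B : Word} (hB : B ∈ blocks w) : B ≠ [] := by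
  induction w generalizing B with
  | nil => simp at hB
  | cons a w ih =>
    rw [blocks_cons] at hB
    rcases hw : blocks w with _ | ⟨C, J⟩
    · simp_all [consBlocks]
    · rw [hw] at hB ih
      simp only [consBlocks] at hB
      split_ifs at hB <;> aesop

lemma consBlocks_extend_last {a : Bool} {I' I J : List Word} {B' B C : Word} (hB' : B' ≠ [])
    (h : consBlocks a (I' ++ [B']) = I ++ [B]) :
    consBlocks a (I' ++ (B' ++ C) :: J) = I ++ (B ++ C) :: J := by
  rcases eq_or_ne I' [] with rfl | hI'
  · obtain ⟨b, B'', rfl⟩ := List.exists_cons_of_ne_nil hB'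
    by_cases hb : b = a
    · obtain ⟨rfl, rfl⟩ := List.append_singleton_inj.mp (h.symm.trans (by simp [consBlocks, hb]) :
        I ++ [B] = [[a]] ++ [b :: B''])
      simp [consBlocks, hb]
    · obtain ⟨rfl, rfl⟩ := List.append_singleton_inj.mp (h.symm.trans (by simp [consBlocks, hb]) :
        I ++ [B] = [] ++ [a :: b :: B''])
      simp [consBlocks, hb]
  · rw [consBlocks_append hI'] at h ⊢
    obtain ⟨rfl, rfl⟩ := List.append_singleton_inj.mp h
    rfl

lemma blocks_append_of_getLast?_ne_head? {u v : Word} {I J : List Word} {B C : Word}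
    (hu : blocks u = I ++ [B]) (hv : blocks v = C :: J) (h : u.getLast? ≠ v.head?) :
    blocks (u ++ v) = I ++ (B ++ C) :: J := by
  induction u generalizing I B with
  | nil => simp at hu
  | cons c u ih =>
    rw [List.cons_append, blocks_cons]
    rw [blocks_cons] at hu
    rcases (blocks u).eq_nil_or_concat with hu' | ⟨I', B', hu'⟩
    · obtain rfl := blocks_eq_nil_iff.mp hu'
      have hC : C.head? ≠ some c := by simpa [hv] using (head?_headD_blocks v).trans_ne h.symm
      obtain ⟨rfl, rfl⟩ := List.append_singleton_inj.mp (hu.symm.trans rfl : I ++ [B] = [] ++ [[c]])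
      simp [hv, consBlocks, hC]
    · have hne : u ≠ [] := by rintro rfl; simp at hu'
      rw [List.concat_eq_append] at hu'
      rw [hu'] at hu
      rw [ih hu' (List.getLast?_cons_of_ne_nil hne ▸ h)]
      exact consBlocks_extend_last (ne_nil_of_mem_blocks (w := u) (by simp [hu'])) hu

section QuantumDimension

variable {q : ℝ}

lemma qnum_eq_sum (hq : q - q⁻¹ ≠ 0) (n : ℕ) :
    qnum q n = ∑ i ∈ range n, q ^ i * q⁻¹ ^ (n - 1 - i) := by
  rw [qnum, ← geom_sum₂_mul, mul_div_cancel_right₀ _ hq]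

lemma qnum_one (hq : q - q⁻¹ ≠ 0) : qnum q 1 = 1 := by
  simp [qnum_eq_sum hq]

lemma qnum_pos (hq0 : 0 < q) (hq : q - q⁻¹ ≠ 0) {n : ℕ} (hn : n ≠ 0) : 0 < qnum q n := by
  rw [qnum_eq_sum hq]
  exact sum_pos (fun i _ => by positivity) (nonempty_range_iff.mpr hn)

lemma qnum_succ_mul_qnum_succ (m n : ℕ) :
    qnum q (m + 1) * qnum q (n + 1) = qnum q (m + n + 1) + qnum q m * qnum q n := by
  rcases eq_or_ne (q - q⁻¹) 0 with hq | hq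
  · simp [qnum, hq]
  have hq0 : q ≠ 0 := by rintro rfl; simp at hq
  have key : (q ^ (m + 1) - q⁻¹ ^ (m + 1)) * (q ^ (n + 1) - q⁻¹ ^ (n + 1)) =
      (q ^ (m + n + 1) - q⁻¹ ^ (m + n + 1)) * (q - q⁻¹) + (q ^ m - q⁻¹ ^ m) * (q ^ n - q⁻¹ ^ n) := by
    simp only [pow_succ, pow_add]
    linear_combination (q ^ m - q⁻¹ ^ m) * (q ^ n - q⁻¹ ^ n) * mul_inv_cancel₀ hq0
  simp only [qnum]
  rw [div_mul_div_comm, div_mul_div_comm, key, add_div, mul_div_mul_right _ _ hq]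

lemma dimq_pos (hq0 : 0 < q) (hq : q - q⁻¹ ≠ 0) (w : Word) : 0 < dimq q w :=
  List.prod_pos fun r hr => by
    obtain ⟨B, -, rfl⟩ := List.mem_map.mp hr
    exact qnum_pos hq0 hq B.length.succ_ne_zero

@[simp] lemma dimq_nil : dimq q [] = 1 := rfl

lemma dimq_append_of_getLast?_eq_head? {u v : Word} (h : u.getLast? = v.head?) :
    dimq q (u ++ v) = dimq q u * dimq q v := by
  simp [dimq, blocks_append_of_getLast?_eq_head? h]

lemma exists_blocks_snoc_and_dimq_eq (hq : q - q⁻¹ ≠ 0) (x : Word) (a : Bool) :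
    ∃ I B, blocks (x ++ [a]) = I ++ [B ++ [a]] ∧
      dimq q x = (I.map fun b => qnum q (b.length + 1)).prod * qnum q (B.length + 1) := by
  rcases (blocks x).eq_nil_or_concat with hx | ⟨I, B, hx⟩
  · obtain rfl := blocks_eq_nil_iff.mp hx
    exact ⟨[], [], rfl, by simp [qnum_one hq]⟩
  rw [List.concat_eq_append] at hx
  by_cases hxa : x.getLast? = some a
  · refine ⟨blocks x, [], ?_, by simp [dimq, qnum_one hq]⟩
    rw [blocks_append_of_getLast?_eq_head? hxa, blocks_singleton]
    rfl
  · exact ⟨I, B, blocks_append_of_getLast?_ne_head? hx (blocks_singleton a) hxa, by simp [dimq, hx]⟩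

lemma exists_blocks_cons_and_dimq_eq (hq : q - q⁻¹ ≠ 0) (b : Bool) (y : Word) :
    ∃ C J, blocks (b :: y) = (b :: C) :: J ∧
      dimq q y = qnum q (C.length + 1) * (J.map fun c => qnum q (c.length + 1)).prod := by
  rw [blocks_cons]
  rcases hy : blocks y with _ | ⟨D, J⟩
  · obtain rfl := blocks_eq_nil_iff.mp hy
    exact ⟨[], [], rfl, by simp [qnum_one hq]⟩
  by_cases hD : D.head? = some b
  · exact ⟨[], D :: J, by simp [consBlocks, hD], by simp [dimq, hy, qnum_one hq]⟩
  · exact ⟨D, J, by simp [consBlocks, hD], by simp [dimq, hy]⟩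

lemma dimq_snoc_mul_dimq_cons (hq : q - q⁻¹ ≠ 0) (x y : Word) (a b : Bool) :
    dimq q (x ++ [a]) * dimq q (b :: y) =
      dimq q (x ++ a :: b :: y) + if b = !a then dimq q x * dimq q y else 0 := by
  have hsplit : x ++ a :: b :: y = (x ++ [a]) ++ b :: y := by simp
  by_cases hba : b = a
  · subst hba
    rw [if_neg (by simp), add_zero, hsplit]
    exact (dimq_append_of_getLast?_eq_head? (by simp)).symm
  obtain ⟨I, B, hu, hx⟩ := exists_blocks_snoc_and_dimq_eq hq x a
  obtain ⟨C, J, hv, hy⟩ := exists_blocks_cons_and_dimq_eq hq b y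
  have huv := blocks_append_of_getLast?_ne_head? hu hv (by simpa [eq_comm] using hba)
  rw [if_pos (Bool.eq_not.mpr hba), hx, hy, hsplit]
  simp only [dimq, hu, hv, huv, List.map_append, List.prod_append, List.map_cons, List.prod_cons,
    List.map_nil, List.prod_nil, List.length_append, List.length_cons, List.length_nil]
  linear_combination (I.map fun b => qnum q (b.length + 1)).prod *
    (J.map fun c => qnum q (c.length + 1)).prod * qnum_succ_mul_qnum_succ (B.length + 1) (C.length + 1)

end QuantumDimension

lemma hasSum_ite_eq_apply {β : Type*} [DecidableEq β] (b : β) (g : β → ℝ) :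
    HasSum (fun c => if c = b then g c else 0) (g b) := by
  simpa using hasSum_single (f := fun c => if c = b then g c else 0) b fun c hc => if_neg hc

lemma hasSum_fm_mul_dimq {q : ℝ} (hq : q - q⁻¹ ≠ 0) (x y : Word) :
    HasSum (fun z => (fm x y z : ℝ) * dimq q z) (dimq q x * dimq q y) := by
  induction x using List.reverseRecOn generalizing y with
  | nil => simpa [fm_nil_left] using hasSum_ite_eq_apply y (dimq q)
  | append_singleton x a ih =>
    cases y with
    | nil => simpa [fm_nil_right] using hasSum_ite_eq_apply (x ++ [a]) (dimq q)
    | cons b y =>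
      rw [dimq_snoc_mul_dimq_cons hq x y a b]
      simp only [fm_snoc_cons, Nat.cast_add, Nat.cast_ite, Nat.cast_one, Nat.cast_zero, add_mul,
        ite_mul, one_mul, zero_mul]
      refine (hasSum_ite_eq_apply _ (dimq q)).add ?_
      split_ifs
      · exact ih y
      · exact hasSum_zero

lemma finite_support_fm (x y : Word) : (Function.support (fm x y)).Finite := by
  refine ((range (x.length + 1)).image fun k => x.take k ++ y.drop (x.length - k)).finite_toSet.subset
    fun z hz => ?_
  obtain ⟨k, hk⟩ := card_ne_zero.mp hz
  rw [mem_filter] at hk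
  exact mem_image.mpr ⟨k, hk.1, hk.2.2.symm⟩

lemma hasSum_of_hasSum_rows_of_nonneg {β γ : Type*} {f : β → γ → ℝ} (hf : ∀ b c, 0 ≤ f b c)
    {r : β → ℝ} {s : γ → ℝ} {a : ℝ} (hr : ∀ b, HasSum (f b) (r b)) (ha : HasSum r a)
    (hs : ∀ c, HasSum (fun b => f b c) (s c)) : HasSum s a := by
  have hsum : Summable fun p : β × γ => f p.1 p.2 := by
    rw [summable_prod_of_nonneg fun p => hf p.1 p.2]
    exact ⟨fun b => (hr b).summable, by simpa only [fun b => (hr b).tsum_eq] using ha.summable⟩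
  have htot : HasSum (fun p : β × γ => f p.1 p.2) a :=
    (hsum.hasSum.prod_fiberwise hr).unique ha ▸ hsum.hasSum
  exact ((Equiv.prodComm γ β).hasSum_iff.mpr htot).prod_fiberwise hs

lemma hasSum_pker (q : ℝ) (μ : Word → ℝ) (x y : Word) :
    HasSum (fun z => μ z * fm x z y * dimq q y / (dimq q x * dimq q z)) (pker q μ x y) := by
  have hfin : (Function.support fun z => μ z * fm x z y * dimq q y / (dimq q x * dimq q z)).Finite :=
    (finite_support_fm (wconj x) y).subset fun z hz h0 => hz (by rw [fm_wconj_left] at h0; simp [h0])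
  have := (summable_of_hasFiniteSupport (L := .unconditional _) hfin).hasSum
  rw [tsum_eq_finsum hfin] at this
  simpa only [pker, fm_wconj_left] using this

/-- For every probability measure `μ` on `I` and every `x ∈ I`,
`Σ_y p(x,y) = 1`: `p` is a stochastic Markov kernel on `I`. -/
theorem pker_stochastic (q : ℝ) (hq0 : 0 < q) (hq1 : q < 1)
    (μ : Word → ℝ) (hμ0 : ∀ z, 0 ≤ μ z) (hμ1 : HasSum μ 1) (x : Word) :
    HasSum (fun y => pker q μ x y) 1 := by
  have hq : q - q⁻¹ ≠ 0 := (sub_neg.mpr (hq1.trans ((one_lt_inv₀ hq0).mpr hq1))).ne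
  have hdim := dimq_pos hq0 hq
  refine hasSum_of_hasSum_rows_of_nonneg
    (f := fun z y => μ z * fm x z y * dimq q y / (dimq q x * dimq q z))
    (fun z y => ?_) (fun z => ?_) hμ1 (hasSum_pker q μ x)
  · exact div_nonneg (mul_nonneg (mul_nonneg (hμ0 z) (Nat.cast_nonneg _)) (hdim y).le)
      (mul_pos (hdim x) (hdim z)).le
  · have := ((hasSum_fm_mul_dimq hq x z).mul_left (μ z)).div_const (dimq q x * dimq q z)
    rw [mul_div_cancel_right₀ _ (mul_pos (hdim x) (hdim z)).ne'] at this
    simpa only [mul_assoc] using this
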